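/- arXiv:1907.01799 — 7 statements merged into one kernel-verified Lean document; each statement's English description precedes it below -/
import Mathlib

section
/- Let μ, ν ∈ ℕ be positive with T := lcm(μ, ν). Then there exists a unique matrix M ∈ ℝ^{2×2} (the T-step solution operator Ψ(T,0)) such that every solution (x, y) of the (μ,ν)-asynchronous system satisfies (x(t+T), y(t+T))ᵀ = M·(x(t), y(t))ᵀ for all t ∈ 𝕋_T = {nT : n ∈ ℕ}; consequently, every solution satisfies (x(kT), y(kT))ᵀ = M^k·(x(0), y(0))ᵀ for all k ∈ ℕ. -/
/-- `(x, y)` is a solution of the `(μ,ν)`-asynchronous system, where `x n` stands for the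
value at time `n·μ ∈ 𝕋_μ` and `y n` for the value at time `n·ν ∈ 𝕋_ν`. -/
def IsAsyncSol (μ ν α β γ δ : ℝ) (x y : ℕ → ℝ) : Prop :=
  (∀ n : ℕ, x (n + 1) = (1 + μ * α) * x n + μ * β * y ⌊(n : ℝ) * μ / ν⌋₊) ∧
  (∀ n : ℕ, y (n + 1) = ν * γ * x ⌊(n : ℝ) * ν / μ⌋₊ + (1 + ν * δ) * y n)

/-- `M` is the `T`-step solution operator (`T = lcm(μ,ν)`): every solution satisfies
`(x(t+T), y(t+T))ᵀ = M (x(t), y(t))ᵀ` for all `t ∈ 𝕋_T`. At time `t = mT`, `x` has index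
`m·(T/μ)` and `y` has index `m·(T/ν)`. -/
def IsTStepOp (μ ν : ℕ) (α β γ δ : ℝ) (M : Matrix (Fin 2) (Fin 2) ℝ) : Prop :=
  ∀ x y : ℕ → ℝ, IsAsyncSol (μ : ℝ) (ν : ℝ) α β γ δ x y →
    ∀ m : ℕ,
      ![x ((m + 1) * (Nat.lcm μ ν / μ)), y ((m + 1) * (Nat.lcm μ ν / ν))] =
        M.mulVec ![x (m * (Nat.lcm μ ν / μ)), y (m * (Nat.lcm μ ν / ν))]

/-!
The system is linear, its solutions are determined by `(x 0, y 0)`, and shifting a solution by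
`T = lcm(μ, ν)` (that is, by `T/μ` steps of `x` and `T/ν` steps of `y`) gives again a solution,
because `T` is a common multiple of both step sizes, so the lags `⌊t/ν⌋ν`, `⌊t/μ⌋μ` commute
with the shift. Hence the state at time `(m+1)T` is a linear function of the state at time
`mT`, independent of `m`; its matrix `M` has the states at time `T` of the solutions started
from the unit vectors as columns, and is unique because every initial state is attained.
-/

theorem Nat.floor_natCast_mul_div_natCast {K : Type*} [Semifield K] [LinearOrder K]
    [IsStrictOrderedRing K] [FloorSemiring K] (n a b : ℕ) : ⌊(n : K) * a / b⌋₊ = n * a / b := by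
  rw [← Nat.cast_mul, Nat.floor_div_natCast, Nat.floor_natCast]

section AsyncSystem

variable {μ ν : ℕ} {α β γ δ : ℝ} {x y x' y' : ℕ → ℝ}

theorem isAsyncSol_natCast_iff :
    IsAsyncSol (μ : ℝ) (ν : ℝ) α β γ δ x y ↔
      (∀ n, x (n + 1) = (1 + μ * α) * x n + μ * β * y (n * μ / ν)) ∧
      (∀ n, y (n + 1) = ν * γ * x (n * ν / μ) + (1 + ν * δ) * y n) := by
  simp only [IsAsyncSol, Nat.floor_natCast_mul_div_natCast]

theorem IsAsyncSol.linearCombination (a b : ℝ) (hs : IsAsyncSol (μ : ℝ) (ν : ℝ) α β γ δ x y)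
    (hs' : IsAsyncSol (μ : ℝ) (ν : ℝ) α β γ δ x' y') :
    IsAsyncSol (μ : ℝ) (ν : ℝ) α β γ δ (a • x + b • x') (a • y + b • y') := by
  refine ⟨fun n => ?_, fun n => ?_⟩ <;>
  simp only [Pi.add_apply, Pi.smul_apply, smul_eq_mul, hs.1 n, hs'.1 n, hs.2 n, hs'.2 n] <;>
  ring

theorem IsAsyncSol.shift {p q : ℕ} (hpq : p * μ = q * ν) (hμ : 0 < μ) (hν : 0 < ν)
    (hs : IsAsyncSol (μ : ℝ) (ν : ℝ) α β γ δ x y) :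
    IsAsyncSol (μ : ℝ) (ν : ℝ) α β γ δ (fun n => x (n + p)) (fun n => y (n + q)) := by
  rw [isAsyncSol_natCast_iff] at hs ⊢
  refine ⟨fun n => ?_, fun n => ?_⟩
  · have hlag : (n + p) * μ / ν = n * μ / ν + q := by
      rw [add_mul, hpq, Nat.add_mul_div_right _ _ hν]
    rw [Nat.add_right_comm, hs.1, hlag]
  · have hlag : (n + q) * ν / μ = n * ν / μ + p := by
      rw [add_mul, ← hpq, Nat.add_mul_div_right _ _ hμ]
    rw [Nat.add_right_comm, hs.2, hlag]

theorem IsAsyncSol.eq_of_initial (hμ : 0 < μ) (hν : 0 < ν)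
    (hs : IsAsyncSol (μ : ℝ) (ν : ℝ) α β γ δ x y) (hs' : IsAsyncSol (μ : ℝ) (ν : ℝ) α β γ δ x' y')
    (hx : x 0 = x' 0) (hy : y 0 = y' 0) : x = x' ∧ y = y' := by
  rw [isAsyncSol_natCast_iff] at hs hs'
  have key : ∀ t, (∀ n, n * μ < t → x n = x' n) ∧ (∀ n, n * ν < t → y n = y' n) := by
    intro t
    induction t with
    | zero => simp
    | succ t ih =>
      refine ⟨fun n hn => ?_, fun n hn => ?_⟩
      · rcases n with _ | m
        · exact hx
        have hm : m * μ < t := by nlinarith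
        rw [hs.1, hs'.1, ih.1 m hm, ih.2 _ ((Nat.div_mul_le_self _ _).trans_lt hm)]
      · rcases n with _ | m
        · exact hy
        have hm : m * ν < t := by nlinarith
        rw [hs.2, hs'.2, ih.2 m hm, ih.1 _ ((Nat.div_mul_le_self _ _).trans_lt hm)]
  exact ⟨funext fun n => (key (n * μ + 1)).1 n (n * μ).lt_succ_self,
    funext fun n => (key (n * ν + 1)).2 n (n * ν).lt_succ_self⟩

end AsyncSystem

section Existence

variable {μ ν : ℕ} (α β γ δ : ℝ)

/-- The solution with initial values `x₀, y₀`: `asyncSol … true` is `x`, `asyncSol … false`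
is `y`. -/
def asyncSol (hμ : 0 < μ) (hν : 0 < ν) (x₀ y₀ : ℝ) : Bool → ℕ → ℝ
  | true, 0 => x₀
  | false, 0 => y₀
  | true, n + 1 => (1 + μ * α) * asyncSol hμ hν x₀ y₀ true n
      + μ * β * asyncSol hμ hν x₀ y₀ false (n * μ / ν)
  | false, n + 1 => ν * γ * asyncSol hμ hν x₀ y₀ true (n * ν / μ)
      + (1 + ν * δ) * asyncSol hμ hν x₀ y₀ false n
termination_by b n => n * cond b μ ν
decreasing_by
  · exact Nat.mul_lt_mul_of_pos_right n.lt_succ_self hμ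
  · exact (Nat.div_mul_le_self _ _).trans_lt (Nat.mul_lt_mul_of_pos_right n.lt_succ_self hμ)
  · exact (Nat.div_mul_le_self _ _).trans_lt (Nat.mul_lt_mul_of_pos_right n.lt_succ_self hν)
  · exact Nat.mul_lt_mul_of_pos_right n.lt_succ_self hν

theorem exists_isAsyncSol (hμ : 0 < μ) (hν : 0 < ν) (x₀ y₀ : ℝ) :
    ∃ x y, IsAsyncSol (μ : ℝ) (ν : ℝ) α β γ δ x y ∧ x 0 = x₀ ∧ y 0 = y₀ := by
  refine ⟨asyncSol α β γ δ hμ hν x₀ y₀ true, asyncSol α β γ δ hμ hν x₀ y₀ false,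
    isAsyncSol_natCast_iff.2 ⟨fun n => ?_, fun n => ?_⟩, ?_, ?_⟩ <;> rw [asyncSol]

theorem exists_isTStepOp (hμ : 0 < μ) (hν : 0 < ν) : ∃ M, IsTStepOp μ ν α β γ δ M := by
  set p := Nat.lcm μ ν / μ
  set q := Nat.lcm μ ν / ν
  have hpq : p * μ = q * ν := by
    rw [Nat.div_mul_cancel (Nat.dvd_lcm_left μ ν), Nat.div_mul_cancel (Nat.dvd_lcm_right μ ν)]
  obtain ⟨x₁, y₁, hs₁, hx₁, hy₁⟩ := exists_isAsyncSol α β γ δ hμ hν 1 0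
  obtain ⟨x₂, y₂, hs₂, hx₂, hy₂⟩ := exists_isAsyncSol α β γ δ hμ hν 0 1
  refine ⟨!![x₁ p, x₂ p; y₁ q, y₂ q], fun x y hs m => ?_⟩
  have hshift := hs.shift (p := m * p) (q := m * q) (by rw [mul_assoc, hpq, mul_assoc]) hμ hν
  obtain ⟨hx, hy⟩ := hshift.eq_of_initial hμ hν (hs₁.linearCombination (x (m * p)) (y (m * q)) hs₂)
    (by simp [hx₁, hx₂]) (by simp [hy₁, hy₂])
  have hxp : x (p + m * p) = x (m * p) * x₁ p + y (m * q) * x₂ p := by simpa using congrFun hx p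
  have hyq : y (q + m * q) = x (m * p) * y₁ q + y (m * q) * y₂ q := by simpa using congrFun hy q
  rw [add_one_mul, add_one_mul, add_comm _ p, add_comm _ q, hxp, hyq]
  ext i
  fin_cases i <;> simp [p, q, mul_comm]

end Existence

section PeriodOperator

variable {μ ν : ℕ} {α β γ δ : ℝ}

theorem IsTStepOp.mulVec_pow {M : Matrix (Fin 2) (Fin 2) ℝ} (hM : IsTStepOp μ ν α β γ δ M)
    {x y : ℕ → ℝ} (hs : IsAsyncSol (μ : ℝ) (ν : ℝ) α β γ δ x y) (k : ℕ) :
    ![x (k * (Nat.lcm μ ν / μ)), y (k * (Nat.lcm μ ν / ν))] = (M ^ k).mulVec ![x 0, y 0] := by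
  induction k with
  | zero => simp
  | succ k ih => rw [hM x y hs k, ih, Matrix.mulVec_mulVec, ← pow_succ']

theorem IsTStepOp.unique (hμ : 0 < μ) (hν : 0 < ν) {M N : Matrix (Fin 2) (Fin 2) ℝ}
    (hM : IsTStepOp μ ν α β γ δ M) (hN : IsTStepOp μ ν α β γ δ N) : M = N := by
  refine Matrix.ext_iff_mulVec.2 fun v => ?_
  obtain ⟨x, y, hs, hx, hy⟩ := exists_isAsyncSol α β γ δ hμ hν (v 0) (v 1)
  have hv : ![x 0, y 0] = v := by ext i; fin_cases i <;> simp [hx, hy]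
  simpa [hv] using (hM x y hs 0).symm.trans (hN x y hs 0)

end PeriodOperator

theorem stmt3 (μ ν : ℕ) (hμ : 0 < μ) (hν : 0 < ν) (α β γ δ : ℝ) :
    ∃! M : Matrix (Fin 2) (Fin 2) ℝ,
      IsTStepOp μ ν α β γ δ M ∧
      ∀ x y : ℕ → ℝ, IsAsyncSol (μ : ℝ) (ν : ℝ) α β γ δ x y →
        ∀ k : ℕ,
          ![x (k * (Nat.lcm μ ν / μ)), y (k * (Nat.lcm μ ν / ν))] =
            (M ^ k).mulVec ![x 0, y 0] := by
  obtain ⟨M, hM⟩ := exists_isTStepOp α β γ δ hμ hν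
  exact ⟨M, ⟨hM, fun x y hs => hM.mulVec_pow hs⟩, fun N hN => hN.1.unique hμ hν hM⟩
end

section
/- Let μ = 1 and ν = 2 and let α, β, γ, δ be real parameters. Then every solution (x, y) of the (1,2)-asynchronous system satisfies, for all t ∈ 𝕋_2 = {0, 2, 4, ...}, the two-step recurrence (x(t+2), y(t+2))ᵀ = Ψ·(x(t), y(t))ᵀ, where Ψ is the matrix with rows ((1+α)², (1+α)β + β) and (2γ, 1+2δ). -/
/-! With `x` stepped at every integer and `y` only at even times, between `2m` and `2m + 2`
the variable `x` is updated twice against the frozen value `y m`, while `y` is updated once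
against `x (2m)`; composing the two `x`-steps gives the first row of the matrix. -/

namespace IsAsyncSol

variable {α β γ δ : ℝ} {x y : ℕ → ℝ}

theorem x_succ_of_one_two (h : IsAsyncSol 1 2 α β γ δ x y) (n : ℕ) :
    x (n + 1) = (1 + α) * x n + β * y (n / 2) := by
  have hlag : ⌊(n : ℝ) * 1 / 2⌋₊ = n / 2 := by
    rw [mul_one]
    exact_mod_cast Nat.floor_div_eq_div (K := ℝ) n 2
  simpa only [one_mul, hlag] using h.1 n

theorem y_succ_of_one_two (h : IsAsyncSol 1 2 α β γ δ x y) (n : ℕ) :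
    y (n + 1) = 2 * γ * x (2 * n) + (1 + 2 * δ) * y n := by
  have hlag : ⌊(n : ℝ) * 2 / 1⌋₊ = 2 * n := by
    rw [div_one, mul_comm]
    exact_mod_cast Nat.floor_natCast (R := ℝ) (2 * n)
  simpa only [hlag] using h.2 n

theorem x_two_mul_succ_of_one_two (h : IsAsyncSol 1 2 α β γ δ x y) (m : ℕ) :
    x (2 * (m + 1)) = (1 + α) ^ 2 * x (2 * m) + ((1 + α) * β + β) * y m := by
  have hodd : (2 * m + 1) / 2 = m := by omega
  rw [show 2 * (m + 1) = 2 * m + 1 + 1 by ring, h.x_succ_of_one_two, hodd,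
    h.x_succ_of_one_two, Nat.mul_div_cancel_left m two_pos]
  ring

end IsAsyncSol

/-- For `μ = 1`, `ν = 2`: at `t = 2m ∈ 𝕋_2`, `x` has index `2m` and `y` has index `m`. -/
theorem stmt4 (α β γ δ : ℝ) (x y : ℕ → ℝ) (h : IsAsyncSol 1 2 α β γ δ x y) :
    ∀ m : ℕ,
      ![x (2 * (m + 1)), y (m + 1)] =
        (!![(1 + α) ^ 2, (1 + α) * β + β; 2 * γ, 1 + 2 * δ]).mulVec ![x (2 * m), y m] := by
  intro m
  rw [h.x_two_mul_succ_of_one_two, h.y_succ_of_one_two]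
  ext i
  fin_cases i <;> simp <;> ring
end

section
/- Let μ ∈ ℕ be positive and ν = 1. Then every solution (x, y) of the (μ,1)-asynchronous system satisfies, for all t ∈ 𝕋_μ, the μ-step recurrence (x(t+μ), y(t+μ))ᵀ = Ψ^{μ,1}·(x(t), y(t))ᵀ, where Ψ^{μ,1} is the matrix with rows (1+μα, μβ) and (γ·Σ_{i=0}^{μ-1}(1+δ)^i, (1+δ)^μ). -/
/-! With `ν = 1`, the lag `x(t^{*μ})` stays frozen at `x(nμ)` while `y` takes its `μ` unit
steps from `nμ` to `(n+1)μ`; those steps form an affine recurrence with constant forcing,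
which sums to a geometric series. -/

theorem affine_recurrence_add {R : Type*} [CommRing R] (y : ℕ → R) (a b : R) (m k : ℕ)
    (h : ∀ j < k, y (m + j + 1) = a + b * y (m + j)) :
    y (m + k) = a * ∑ i ∈ Finset.range k, b ^ i + b ^ k * y m := by
  induction k with
  | zero => simp
  | succ k ih =>
    rw [← add_assoc, h k k.lt_succ_self, ih fun j hj => h j (hj.trans k.lt_succ_self),
      geom_sum_succ, pow_succ]
    ring

theorem Nat.floor_mul_add_div_eq {μ k : ℕ} (hk : k < μ) (n : ℕ) :
    ⌊((n * μ + k : ℕ) : ℝ) / μ⌋₊ = n := by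
  rw [Nat.floor_div_natCast, Nat.floor_natCast, mul_comm n μ,
    Nat.mul_add_div (k.zero_le.trans_lt hk), Nat.div_eq_of_lt hk, add_zero]

namespace IsAsyncSol

variable {μ : ℕ} {α β γ δ : ℝ} {x y : ℕ → ℝ}

theorem x_succ (h : IsAsyncSol μ 1 α β γ δ x y) (n : ℕ) :
    x (n + 1) = (1 + μ * α) * x n + μ * β * y (n * μ) := by
  rw [h.1 n, div_one, ← Nat.cast_mul, Nat.floor_natCast]

theorem y_succ_of_lt (h : IsAsyncSol μ 1 α β γ δ x y) (n : ℕ) {k : ℕ} (hk : k < μ) :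
    y (n * μ + k + 1) = γ * x n + (1 + δ) * y (n * μ + k) := by
  have hy := h.2 (n * μ + k)
  rw [mul_one, Nat.floor_mul_add_div_eq hk] at hy
  simpa only [one_mul] using hy

theorem y_succ_mul (h : IsAsyncSol μ 1 α β γ δ x y) (n : ℕ) :
    y ((n + 1) * μ) = γ * (∑ i ∈ Finset.range μ, (1 + δ) ^ i) * x n
      + (1 + δ) ^ μ * y (n * μ) := by
  rw [add_one_mul, affine_recurrence_add y _ _ _ _ fun k hk => h.y_succ_of_lt n hk]
  ring

end IsAsyncSol

theorem stmt7_general (μ : ℕ) (α β γ δ : ℝ)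
    (x y : ℕ → ℝ) (hxy : IsAsyncSol (μ : ℝ) 1 α β γ δ x y) :
    ∀ n : ℕ,
      ![x (n + 1), y ((n + 1) * μ)] =
        (!![1 + (μ : ℝ) * α, (μ : ℝ) * β;
            γ * ∑ i ∈ Finset.range μ, (1 + δ) ^ i, (1 + δ) ^ μ]).mulVec
          ![x n, y (n * μ)] := by
  intro n
  ext i
  fin_cases i
  · simp [Matrix.mulVec, dotProduct, hxy.x_succ n]
  · simp [Matrix.mulVec, dotProduct, hxy.y_succ_mul n]

/-- For the `(μ,1)`-system: at `t = nμ ∈ 𝕋_μ`, `x` has index `n` and `y` has index `nμ`. -/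
theorem stmt7 (μ : ℕ) (hμ : 0 < μ) (α β γ δ : ℝ)
    (x y : ℕ → ℝ) (hxy : IsAsyncSol (μ : ℝ) 1 α β γ δ x y) :
    ∀ n : ℕ,
      ![x (n + 1), y ((n + 1) * μ)] =
        (!![1 + (μ : ℝ) * α, (μ : ℝ) * β;
            γ * ∑ i ∈ Finset.range μ, (1 + δ) ^ i, (1 + δ) ^ μ]).mulVec
          ![x n, y (n * μ)] :=
  stmt7_general μ α β γ δ x y hxy
end

section
/- Let μ ∈ ℕ be positive and ν = 1, and let (x, y) be a solution of the (μ,1)-asynchronous system. Then for every n ∈ ℕ and every m ∈ {0, 1, ..., μ-1}: x is constant on the block {nμ, nμ+1, ..., nμ+μ-1} (i.e. x(t^{*μ}) = x(nμ) for t in this block), and y(nμ+m) = γ·(Σ_{i=0}^{m-1}(1+δ)^i)·x(nμ) + (1+δ)^m·y(nμ). -/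
/-! With `ν = 1`, the times `nμ, …, nμ + μ - 1` of `𝕋_1` all sample `x` at index `n`, so on
that block `y` obeys an affine recurrence with constant forcing `γ x(nμ)`, which unrolls to a
geometric sum. -/

lemma Nat.floor_cast_mul_add_div_of_lt {μ m : ℕ} (n : ℕ) (hm : m < μ) :
    ⌊((n * μ + m : ℕ) : ℝ) / μ⌋₊ = n := by
  rw [Nat.floor_div_natCast, Nat.floor_natCast, Nat.mul_comm n μ,
    Nat.mul_add_div (Nat.zero_lt_of_lt hm), Nat.div_eq_of_lt hm, Nat.add_zero]

lemma eq_geom_sum_of_affine_recurrence {R : Type*} [CommSemiring R] {y : ℕ → R} {a r : R}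
    {N m : ℕ} (h : ∀ k < m, y (N + k + 1) = a + r * y (N + k)) :
    y (N + m) = a * ∑ i ∈ Finset.range m, r ^ i + r ^ m * y N := by
  induction m with
  | zero => simp
  | succ k ih =>
    rw [← Nat.add_assoc, h k (Nat.lt_succ_self k),
      ih fun j hj => h j (Nat.lt_succ_of_lt hj), geom_sum_succ]
    ring

theorem stmt8_general (μ : ℕ) (α β γ δ : ℝ)
    (x y : ℕ → ℝ) (hxy : IsAsyncSol (μ : ℝ) 1 α β γ δ x y) :
    ∀ n : ℕ, ∀ m < μ,
      x ⌊((n * μ + m : ℕ) : ℝ) * 1 / (μ : ℝ)⌋₊ = x n ∧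
      y (n * μ + m) =
        γ * (∑ i ∈ Finset.range m, (1 + δ) ^ i) * x n + (1 + δ) ^ m * y (n * μ) := by
  intro n m hm
  rw [mul_one]
  refine ⟨by rw [Nat.floor_cast_mul_add_div_of_lt n hm], ?_⟩
  have hblock : ∀ k < m, y (n * μ + k + 1) = γ * x n + (1 + δ) * y (n * μ + k) := by
    intro k hk
    rw [hxy.2, one_mul, one_mul, mul_one, Nat.floor_cast_mul_add_div_of_lt n (hk.trans hm)]
  rw [eq_geom_sum_of_affine_recurrence hblock]
  ring

/-- For a solution of the `(μ,1)`-system: on the block `{nμ, …, nμ+μ-1}` the sampled value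
of `x` is `x(nμ)` (i.e. `x(t^{*μ}) = x(nμ)`, the sample index `⌊(nμ+m)·1/μ⌋` being `n`),
and `y(nμ+m) = γ·(Σ_{i<m}(1+δ)^i)·x(nμ) + (1+δ)^m·y(nμ)`. -/
theorem stmt8 (μ : ℕ) (hμ : 0 < μ) (α β γ δ : ℝ)
    (x y : ℕ → ℝ) (hxy : IsAsyncSol (μ : ℝ) 1 α β γ δ x y) :
    ∀ n : ℕ, ∀ m < μ,
      x ⌊((n * μ + m : ℕ) : ℝ) * 1 / (μ : ℝ)⌋₊ = x n ∧
      y (n * μ + m) =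
        γ * (∑ i ∈ Finset.range m, (1 + δ) ^ i) * x n + (1 + δ) ^ m * y (n * μ) :=
  stmt8_general μ α β γ δ x y hxy
end

section
/- Consider the parameters α = -1/16, β = 1/8, γ = -1/8, δ = -1/16 and μ = 7. The synchronous 7-step matrix Ψ^{7,7} with rows (9/16, 7/8) and (-7/8, 9/16) has every complex eigenvalue of modulus strictly greater than 1 (so the origin of the (7,7)-synchronous system is not asymptotically stable), while the asynchronous 7-step matrix Ψ^{7,1} with rows (9/16, 7/8) and (-97576081/134217728, 170859375/268435456) has every complex eigenvalue of modulus strictly less than 1 (so the origin of the (7,1)-asynchronous system is asymptotically stable). -/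
/-!
Both matrices are real 2×2 matrices with `tr² ≤ 4 det`, so their eigenvalues are a pair of
complex conjugates (or a double real root) and each has squared modulus `det`. The determinants
are `277/256 > 1` and `4269864643/4294967296 < 1`.
-/

open Matrix Polynomial

theorem Complex.normSq_eq_of_sq_sub_mul_add_eq_zero {t d : ℝ} (hdisc : t ^ 2 ≤ 4 * d) {z : ℂ}
    (hz : z ^ 2 - t * z + d = 0) : Complex.normSq z = d := by
  have hre := congrArg Complex.re hz
  have him := congrArg Complex.im hz
  simp only [sq, Complex.sub_re, Complex.add_re, Complex.mul_re, Complex.ofReal_re,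
    Complex.ofReal_im, Complex.sub_im, Complex.add_im, Complex.mul_im, Complex.zero_re,
    Complex.zero_im] at hre him
  rw [Complex.normSq_apply]
  have hfactor : z.im * (2 * z.re - t) = 0 := by linarith
  rcases mul_eq_zero.mp hfactor with hreal | hcentre
  · rw [hreal] at hre ⊢
    nlinarith [sq_nonneg (2 * z.re - t)]
  · linear_combination -hre + z.re * hcentre

theorem Matrix.sq_sub_trace_mul_add_det_eq_zero {K : Type*} [Field K]
    {A : Matrix (Fin 2) (Fin 2) K} {z : K} (hz : z ∈ spectrum K A) :
    z ^ 2 - A.trace * z + A.det = 0 := by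
  simpa [charpoly_fin_two] using (mem_spectrum_iff_isRoot_charpoly.mp hz).eq_zero

theorem Matrix.norm_sq_eq_det_of_mem_spectrum_map {A : Matrix (Fin 2) (Fin 2) ℝ}
    (hdisc : A.trace ^ 2 ≤ 4 * A.det) {z : ℂ} (hz : z ∈ spectrum ℂ (A.map Complex.ofReal)) :
    ‖z‖ ^ 2 = A.det := by
  have htrace : (A.map Complex.ofReal).trace = A.trace :=
    (AddMonoidHom.map_trace Complex.ofRealHom A).symm
  have hdet : (A.map Complex.ofReal).det = A.det := (Complex.ofRealHom.map_det A).symm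
  have hz := sq_sub_trace_mul_add_det_eq_zero hz
  rw [htrace, hdet] at hz
  rw [Complex.sq_norm]
  exact Complex.normSq_eq_of_sq_sub_mul_add_eq_zero hdisc hz

/-- Parameters `α = -1/16`, `β = 1/8`, `γ = -1/8`, `δ = -1/16`, `μ = 7`:
the synchronous matrix `Ψ^{7,7} = I + 7P` has all eigenvalues of modulus `> 1`,
while the asynchronous matrix `Ψ^{7,1}` has all eigenvalues of modulus `< 1`. -/
theorem stmt10 :
    (!![1 + 7 * (-1/16 : ℝ), 7 * (1/8); 7 * (-1/8), 1 + 7 * (-1/16)] =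
        !![(9 : ℝ)/16, 7/8; -7/8, 9/16]) ∧
    (∀ z ∈ spectrum ℂ ((!![(9 : ℝ)/16, 7/8; -7/8, 9/16]).map Complex.ofReal),
      1 < ‖z‖) ∧
    (!![1 + 7 * (-1/16 : ℝ), 7 * (1/8);
        (-1/8) * ∑ i ∈ Finset.range 7, (1 + (-1/16 : ℝ)) ^ i, (1 + (-1/16 : ℝ)) ^ 7] =
        !![(9 : ℝ)/16, 7/8; -97576081/134217728, 170859375/268435456]) ∧
    (∀ z ∈ spectrum ℂ
        ((!![(9 : ℝ)/16, 7/8; -97576081/134217728, 170859375/268435456]).map Complex.ofReal),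
      ‖z‖ < 1) := by
  refine ⟨by norm_num [← Matrix.ext_iff], fun z hz => ?_,
    by norm_num [Finset.sum_range_succ, ← Matrix.ext_iff], fun z hz => ?_⟩
  · have hnorm := norm_sq_eq_det_of_mem_spectrum_map (by norm_num [trace_fin_two, det_fin_two]) hz
    rw [det_fin_two_of] at hnorm
    exact (one_lt_sq_iff₀ (norm_nonneg z)).mp (by rw [hnorm]; norm_num)
  · have hnorm := norm_sq_eq_det_of_mem_spectrum_map (by norm_num [trace_fin_two, det_fin_two]) hz
    rw [det_fin_two_of] at hnorm
    exact (sq_lt_one_iff₀ (norm_nonneg z)).mp (by rw [hnorm]; norm_num)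
end

section
/- The 2×2 real matrix with rows (-17, -2) and (1089/8, 16) has -1/2 as its only complex eigenvalue (a double eigenvalue, of modulus < 1), whereas the 2×2 real matrix with rows (-8, -1) and (1089/40, 4) has the complex eigenvalue (-40 - 3√390)/20, whose modulus is strictly greater than 1; hence a one-step matrix can be unstable while the associated two-step matrix is Schur stable. -/
open Matrix

theorem Matrix.mem_spectrum_fin_two_iff {K : Type*} [Field K] (A : Matrix (Fin 2) (Fin 2) K)
    (z : K) : z ∈ spectrum K A ↔ z ^ 2 - A.trace * z + A.det = 0 := by
  simp [mem_spectrum_iff_isRoot_charpoly, charpoly_fin_two]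

theorem Matrix.mem_spectrum_map_ofReal_fin_two_iff (A : Matrix (Fin 2) (Fin 2) ℝ) (z : ℂ) :
    z ∈ spectrum ℂ (A.map Complex.ofReal) ↔ z ^ 2 - A.trace * z + A.det = 0 := by
  simp [mem_spectrum_fin_two_iff, trace_fin_two, det_fin_two]

theorem Matrix.ofReal_mem_spectrum_map_ofReal_fin_two_iff (A : Matrix (Fin 2) (Fin 2) ℝ)
    (x : ℝ) : (x : ℂ) ∈ spectrum ℂ (A.map Complex.ofReal) ↔ x ^ 2 - A.trace * x + A.det = 0 := by
  rw [mem_spectrum_map_ofReal_fin_two_iff]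
  exact_mod_cast Iff.rfl

/-- The two-step matrix `Ψ^{2,1}(2,0)` has `-1/2` as its only (double) eigenvalue, of
modulus `< 1` (Schur stable), while the one-step matrix `Ψ^{1,1}(1,0) = P` has the
eigenvalue `(-40 - 3√390)/20` of modulus `> 1` (unstable). -/
theorem stmt12 :
    spectrum ℂ ((!![(-17 : ℝ), -2; 1089/8, 16]).map Complex.ofReal) = {(-1/2 : ℂ)} ∧
    (∀ z ∈ spectrum ℂ ((!![(-17 : ℝ), -2; 1089/8, 16]).map Complex.ofReal),
      ‖z‖ < 1) ∧
    (((-40 - 3 * Real.sqrt 390) / 20 : ℝ) : ℂ) ∈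
      spectrum ℂ ((!![(-8 : ℝ), -1; 1089/40, 4]).map Complex.ofReal) ∧
    1 < ‖(((-40 - 3 * Real.sqrt 390) / 20 : ℝ) : ℂ)‖ := by
  have hspec : spectrum ℂ ((!![(-17 : ℝ), -2; 1089/8, 16]).map Complex.ofReal)
      = {(-1/2 : ℂ)} := by
    ext z
    rw [mem_spectrum_map_ofReal_fin_two_iff, Set.mem_singleton_iff]
    norm_num [trace_fin_two, det_fin_two]
    rw [show z ^ 2 + z + 1 / 4 = (z + 1 / 2) ^ 2 by ring, sq_eq_zero_iff, add_eq_zero_iff_eq_neg]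
  refine ⟨hspec, ?_, ?_, ?_⟩
  · rintro z hz
    rw [hspec, Set.mem_singleton_iff] at hz
    norm_num [hz]
  · -- the characteristic polynomial of P is x² + 4x - 191/40, with roots -2 ± 3√390/20
    rw [ofReal_mem_spectrum_map_ofReal_fin_two_iff]
    norm_num [trace_fin_two, det_fin_two]
    nlinarith [Real.sq_sqrt (show (0 : ℝ) ≤ 390 by norm_num)]
  · rw [Complex.norm_real, Real.norm_eq_abs, lt_abs]
    right
    linarith [Real.sqrt_nonneg 390]
end

section
/- Let r := (29/80)^{1/6} (the positive real sixth root) and set α̂ = -17/60, β̂ = 1/60, γ̂ = -(9/16)/(Σ_{i=0}^{5} r^i), δ̂ = r - 1. Then the six-step matrix of the (6,1)-asynchronous system with parameters (α̂, β̂, γ̂, δ̂), namely the matrix with rows (1+6α̂, 6β̂) and (γ̂·Σ_{i=0}^{5}(1+δ̂)^i, (1+δ̂)^6), equals the matrix with rows (-7/10, 1/10) and (-9/16, 29/80); hence this (6,1)-system is dynamically equivalent (same T = 6 step solution operator) to the (2,3)-asynchronous system with parameters α = -1, β = 1/5, γ = 1/4, δ = -1/4. -/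
/-! With `r⁶ = 29/80`, the choice `δ̂ = r - 1` makes `(1 + δ̂)⁶ = 29/80`, and dividing by the
geometric sum `Σ_{i<6} rⁱ` in `γ̂` cancels against the sum `Σ_{i<6} (1 + δ̂)ⁱ` in the lower left
entry. All other entries, including the whole six-step operator of the `(2,3)`-system, are
rational arithmetic. -/

theorem div_geom_sum_mul_geom_sum {K : Type*} [Field K] [LinearOrder K] [IsStrictOrderedRing K]
    {x : K} (hx : 0 ≤ x) {n : ℕ} (hn : n ≠ 0) (c : K) :
    c / (∑ i ∈ Finset.range n, x ^ i) * ∑ i ∈ Finset.range n, x ^ i = c :=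
  div_mul_cancel₀ c (geom_sum_pos hx hn).ne'

theorem Real.rpow_one_div_natCast_pow {x : ℝ} (hx : 0 ≤ x) {n : ℕ} (hn : n ≠ 0) :
    (x ^ ((1 : ℝ) / n)) ^ n = x := by
  rw [one_div, Real.rpow_inv_natCast_pow hx hn]

/-- With `r = (29/80)^{1/6}` and `α̂ = -17/60`, `β̂ = 1/60`, `γ̂ = -(9/16)/Σ_{i<6} rⁱ`,
`δ̂ = r - 1`, the six-step matrix of the `(6,1)`-asynchronous system equals the matrix
with rows `(-7/10, 1/10)` and `(-9/16, 29/80)`, which is also the six-step solution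
operator of the `(2,3)`-system with `α = -1`, `β = 1/5`, `γ = 1/4`, `δ = -1/4`:
the two systems are dynamically equivalent. -/
theorem stmt17 :
    let r : ℝ := (29/80 : ℝ) ^ ((1 : ℝ)/6)
    let αh : ℝ := -17/60
    let βh : ℝ := 1/60
    let γh : ℝ := -(9/16) / (∑ i ∈ Finset.range 6, r ^ i)
    let δh : ℝ := r - 1
    (!![1 + 6 * αh, 6 * βh;
        γh * ∑ i ∈ Finset.range 6, (1 + δh) ^ i, (1 + δh) ^ 6] =
      !![(-7 : ℝ)/10, 1/10; -9/16, 29/80]) ∧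
    (!![(2*(-1 : ℝ)+1)^3 + 6*(1/5)*(1/4),
          (2*(-1 : ℝ)+1) * (2*(2*(-1 : ℝ)+1)*(1/5) + 2*(1/5)) + 2*(1/5)*(3*(-1/4 : ℝ)+1);
        3*(2*(-1 : ℝ)+1)*(1/4) + 3*(3*(-1/4 : ℝ)+1)*(1/4),
          (3*(-1/4 : ℝ)+1)^2 + 6*(1/5)*(1/4)] =
      !![(-7 : ℝ)/10, 1/10; -9/16, 29/80]) := by
  intro r αh βh γh δh
  have hr : 0 ≤ r := Real.rpow_nonneg (by norm_num) _
  have hr6 : r ^ 6 = 29/80 := by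
    exact_mod_cast Real.rpow_one_div_natCast_pow (x := 29/80) (by norm_num) (n := 6) (by norm_num)
  have hδ : 1 + δh = r := add_sub_cancel 1 r
  have hγ : γh * ∑ i ∈ Finset.range 6, r ^ i = -(9/16) :=
    div_geom_sum_mul_geom_sum hr (by norm_num) _
  rw [hδ, hγ, hr6]
  constructor <;> ext i j <;> fin_cases i <;> fin_cases j <;> norm_num [αh, βh]
end
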